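/- arXiv:2212.07365 — 2 statements merged into one kernel-verified Lean document; each statement's English description precedes it below -/
import Mathlib

section
/- Let m be a positive integer, let y, μ_l, μ_k ∈ ℝ^m, and let α_l, α_k ∈ (0,∞)^m be fixed strictly positive base steepness vectors. Assume that y_i ≠ μ_{li} and y_i ≠ μ_{ki} for every i = 1, …, m, and that there exists at least one index i with μ_{ki} < μ_{li} (so that H(y; (μ_l, tα_l), (μ_k, tα_k)) = 0). Then the product Λ(y; μ_l, tα_l)·P(y; μ_k, tα_k) converges to 0 exponentially as the steepness goes to infinity: there exist constants C, c > 0 such that Λ(y; μ_l, tα_l)·P(y; μ_k, tα_k) ≤ C·exp(−c·t) for all t ≥ 1. -/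
open MeasureTheory ProbabilityTheory Real

noncomputable def logisticFun (y μ α : ℝ) : ℝ := 1 / (1 + Real.exp (-α * (y - μ)))

noncomputable def rbfFun (y μ α : ℝ) : ℝ :=
  Real.exp (-α * (y - μ)) / (1 + Real.exp (-α * (y - μ))) ^ 2

noncomputable def conjLog {m : ℕ} (y μ α : Fin m → ℝ) : ℝ :=
  ∏ i, logisticFun (y i) (μ i) (α i)

noncomputable def conjRBF {m : ℕ} (y μ α : Fin m → ℝ) : ℝ :=
  ∏ i, rbfFun (y i) (μ i) (α i)

open scoped Classical in
/-- Decision function `H(y; (μl, αl), (μk, αk))`. -/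
noncomputable def decisionH {m : ℕ} (y μl αl μk αk : Fin m → ℝ) : ℝ :=
  if ∀ i, μl i < μk i then conjRBF y μk αk else 0

/-! Pick a coordinate `i` with `μk i < μl i`. If `y i < μl i`, the logistic factor at `i` is at most
`exp (t αl i (y i - μl i))`; otherwise `μk i < y i`, and the RBF factor at `i` is at most
`exp (-t αk i (y i - μk i))`. All other factors of both products lie in `[0, 1]`. -/

lemma logisticFun_pos (y μ α : ℝ) : 0 < logisticFun y μ α := by
  unfold logisticFun
  positivity

lemma logisticFun_le_one (y μ α : ℝ) : logisticFun y μ α ≤ 1 := by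
  unfold logisticFun
  rw [div_le_one (by positivity)]
  linarith [exp_pos (-α * (y - μ))]

lemma logisticFun_le_exp (y μ α : ℝ) : logisticFun y μ α ≤ exp (α * (y - μ)) := by
  have hinv : exp (-α * (y - μ)) = (exp (α * (y - μ)))⁻¹ := by
    rw [← exp_neg, neg_mul]
  unfold logisticFun
  rw [div_le_iff₀ (by positivity), hinv, mul_add, mul_inv_cancel₀ (exp_pos _).ne']
  linarith [exp_pos (α * (y - μ))]

lemma rbfFun_pos (y μ α : ℝ) : 0 < rbfFun y μ α := by
  unfold rbfFun
  positivity

lemma rbfFun_le_one (y μ α : ℝ) : rbfFun y μ α ≤ 1 := by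
  unfold rbfFun
  rw [div_le_one (by positivity)]
  nlinarith [exp_pos (-α * (y - μ))]

lemma rbfFun_le_exp (y μ α : ℝ) : rbfFun y μ α ≤ exp (-α * (y - μ)) := by
  unfold rbfFun
  rw [div_le_iff₀ (by positivity)]
  nlinarith [exp_pos (-α * (y - μ)), sq_nonneg (exp (-α * (y - μ)))]

lemma Finset.prod_le_of_mem_of_nonneg_of_le_one {ι R : Type*} [CommMonoidWithZero R] [Preorder R]
    [ZeroLEOneClass R] [PosMulMono R] {s : Finset ι} {f : ι → R} {i : ι}
    (hi : i ∈ s) (hf0 : ∀ j ∈ s, 0 ≤ f j) (hf1 : ∀ j ∈ s, f j ≤ 1) : ∏ j ∈ s, f j ≤ f i := by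
  simpa using Finset.prod_le_prod_of_subset_of_le_one (Finset.singleton_subset_iff.2 hi) hf0
    fun j hj _ => hf1 j hj

section Conjunctive

variable {m : ℕ} (y μ α : Fin m → ℝ)

lemma conjLog_nonneg : 0 ≤ conjLog y μ α :=
  Finset.prod_nonneg fun _ _ => (logisticFun_pos _ _ _).le

lemma conjLog_le_logisticFun (i : Fin m) : conjLog y μ α ≤ logisticFun (y i) (μ i) (α i) :=
  Finset.prod_le_of_mem_of_nonneg_of_le_one (Finset.mem_univ i)
    (fun _ _ => (logisticFun_pos _ _ _).le) fun _ _ => logisticFun_le_one _ _ _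

lemma conjLog_le_one : conjLog y μ α ≤ 1 :=
  Finset.prod_le_one (fun _ _ => (logisticFun_pos _ _ _).le) fun _ _ => logisticFun_le_one _ _ _

lemma conjRBF_nonneg : 0 ≤ conjRBF y μ α :=
  Finset.prod_nonneg fun _ _ => (rbfFun_pos _ _ _).le

lemma conjRBF_le_rbfFun (i : Fin m) : conjRBF y μ α ≤ rbfFun (y i) (μ i) (α i) :=
  Finset.prod_le_of_mem_of_nonneg_of_le_one (Finset.mem_univ i)
    (fun _ _ => (rbfFun_pos _ _ _).le) fun _ _ => rbfFun_le_one _ _ _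

lemma conjRBF_le_one : conjRBF y μ α ≤ 1 :=
  Finset.prod_le_one (fun _ _ => (rbfFun_pos _ _ _).le) fun _ _ => rbfFun_le_one _ _ _

end Conjunctive

theorem logistic_mul_rbf_exp_decay_of_exists_center_lt_general
    (m : ℕ) (y μl μk αl αk : Fin m → ℝ)
    (hαl : ∀ i, 0 < αl i) (hαk : ∀ i, 0 < αk i)
    (hcenter : ∃ i, μk i < μl i) :
    ∃ C c : ℝ, 0 < C ∧ 0 < c ∧ ∀ t : ℝ, 1 ≤ t →
      conjLog y μl (fun i => t * αl i) * conjRBF y μk (fun i => t * αk i)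
        ≤ C * Real.exp (-c * t) := by
  obtain ⟨i, hi⟩ := hcenter
  rcases lt_or_ge (y i) (μl i) with hy | hy
  · refine ⟨1, αl i * (μl i - y i), one_pos, mul_pos (hαl i) (sub_pos.2 hy), fun t _ => ?_⟩
    calc conjLog y μl (fun j => t * αl j) * conjRBF y μk (fun j => t * αk j)
        ≤ conjLog y μl (fun j => t * αl j) :=
          mul_le_of_le_one_right (conjLog_nonneg _ _ _) (conjRBF_le_one _ _ _)
      _ ≤ logisticFun (y i) (μl i) (t * αl i) := conjLog_le_logisticFun _ _ _ i
      _ ≤ exp (t * αl i * (y i - μl i)) := logisticFun_le_exp _ _ _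
      _ = 1 * exp (-(αl i * (μl i - y i)) * t) := by ring_nf
  · have hy' : μk i < y i := hi.trans_le hy
    refine ⟨1, αk i * (y i - μk i), one_pos, mul_pos (hαk i) (sub_pos.2 hy'), fun t _ => ?_⟩
    calc conjLog y μl (fun j => t * αl j) * conjRBF y μk (fun j => t * αk j)
        ≤ conjRBF y μk (fun j => t * αk j) :=
          mul_le_of_le_one_left (conjRBF_nonneg _ _ _) (conjLog_le_one _ _ _)
      _ ≤ rbfFun (y i) (μk i) (t * αk i) := conjRBF_le_rbfFun _ _ _ i
      _ ≤ exp (-(t * αk i) * (y i - μk i)) := rbfFun_le_exp _ _ _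
      _ = 1 * exp (-(αk i * (y i - μk i)) * t) := by ring_nf

theorem logistic_mul_rbf_exp_decay_of_exists_center_lt
    (m : ℕ) (hm : 0 < m) (y μl μk αl αk : Fin m → ℝ)
    (hαl : ∀ i, 0 < αl i) (hαk : ∀ i, 0 < αk i)
    (hyl : ∀ i, y i ≠ μl i) (hyk : ∀ i, y i ≠ μk i)
    (hcenter : ∃ i, μk i < μl i) :
    ∃ C c : ℝ, 0 < C ∧ 0 < c ∧ ∀ t : ℝ, 1 ≤ t →
      conjLog y μl (fun i => t * αl i) * conjRBF y μk (fun i => t * αk i)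
        ≤ C * Real.exp (-c * t) :=
  logistic_mul_rbf_exp_decay_of_exists_center_lt_general m y μl μk αl αk hαl hαk hcenter
end

section
/- Let m be a positive integer, a > 0, and α ∈ ℝ^m. Let Y_1, …, Y_m, M_1, …, M_m be 2m mutually independent random variables, each uniformly distributed on [−a, a], and set Y = (Y_1, …, Y_m), M = (M_1, …, M_m). Then the expected value of the conjunctive logistic function with random measurement Y and random center M is E[Λ(Y; M, α)] = 2^{−m}. -/
open MeasureTheory ProbabilityTheory Real

/-!
Swapping measurement and center turns `λ(y; μ, α)` into `1 - λ(y; μ, α)`. Hence, for `Y` and `M`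
independent with a common law, the pairs `(Y, M)` and `(M, Y)` have the same law and
`E[λ(Y; M, α)] = E[1 - λ(Y; M, α)] = 1/2`. By independence the `m` factors of `Λ(Y; M, α)`, which
depend on the disjoint pairs `(Yᵢ, Mᵢ)`, are integrated separately, giving `2^{-m}`.
-/

lemma logisticFun_add_logisticFun_swap (y μ α : ℝ) :
    logisticFun y μ α + logisticFun μ y α = 1 := by
  have hinv : Real.exp (-α * (μ - y)) = (Real.exp (-α * (y - μ)))⁻¹ := by
    rw [← Real.exp_neg]; ring_nf
  unfold logisticFun
  rw [hinv]
  field_simp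
  ring

lemma Continuous.logisticFun {X : Type*} [TopologicalSpace X] {f g : X → ℝ} (hf : Continuous f)
    (hg : Continuous g) (α : ℝ) : Continuous fun x => logisticFun (f x) (g x) α :=
  continuous_const.div (by fun_prop) fun _ => by positivity

lemma logisticFun_mem_Icc (y μ α : ℝ) : logisticFun y μ α ∈ Set.Icc 0 1 := by
  unfold logisticFun
  refine ⟨by positivity, ?_⟩
  rw [div_le_one (by positivity)]
  linarith [Real.exp_pos (-α * (y - μ))]

lemma integrable_logisticFun (ρ : Measure (ℝ × ℝ)) [IsFiniteMeasure ρ] (α : ℝ) :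
    Integrable (fun p : ℝ × ℝ => logisticFun p.1 p.2 α) ρ :=
  (integrable_const 1).mono' (continuous_fst.logisticFun continuous_snd α).aestronglyMeasurable <|
    ae_of_all _ fun p => by
      obtain ⟨h0, h1⟩ := logisticFun_mem_Icc p.1 p.2 α
      rwa [Real.norm_eq_abs, abs_of_nonneg h0]

lemma integral_prod_self_eq_half {X : Type*} [MeasurableSpace X] (ν : Measure X)
    [IsProbabilityMeasure ν] {f : X × X → ℝ} (hf : Integrable f (ν.prod ν))
    (hswap : ∀ p, f p + f p.swap = 1) :
    ∫ p, f p ∂(ν.prod ν) = 1 / 2 := by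
  have hsum := integral_add hf hf.swap
  simp only [Function.comp_apply, hswap, integral_const, probReal_univ, smul_eq_mul, mul_one,
    integral_prod_swap] at hsum
  linarith

lemma integral_logisticFun_prod_self (ν : Measure ℝ) [IsProbabilityMeasure ν] (α : ℝ) :
    ∫ p, logisticFun p.1 p.2 α ∂(ν.prod ν) = 1 / 2 :=
  integral_prod_self_eq_half ν (integrable_logisticFun _ α) fun p =>
    logisticFun_add_logisticFun_swap p.1 p.2 α

lemma integral_pi_sum_prod_eq_prod {ι X 𝕜 : Type*} [Fintype ι] [MeasurableSpace X]
    [RCLike 𝕜] (ν : Measure X) [SigmaFinite ν] (g : ι → X × X → 𝕜) :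
    ∫ x : ι ⊕ ι → X, ∏ i, g i (x (.inl i), x (.inr i)) ∂(Measure.pi fun _ => ν) =
      ∏ i, ∫ p, g i p ∂(ν.prod ν) := by
  calc _ = ∫ uv : (ι → X) × (ι → X), ∏ i, g i (uv.1 i, uv.2 i)
          ∂((Measure.pi fun _ => ν).prod (Measure.pi fun _ => ν)) :=
        (measurePreserving_sumPiEquivProdPi fun _ : ι ⊕ ι => ν).integral_comp'
          fun uv => ∏ i, g i (uv.1 i, uv.2 i)
    _ = ∫ x : ι → X × X, ∏ i, g i (x i) ∂(Measure.pi fun _ => ν.prod ν) :=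
        ((measurePreserving_arrowProdEquivProdArrow X X ι (fun _ => ν) fun _ => ν).integral_comp'
          fun uv => ∏ i, g i (uv.1 i, uv.2 i)).symm
    _ = _ := integral_fintype_prod_eq_prod _

lemma integral_conjLog_eq_prod_of_map_eq_pi {Ω : Type*} [MeasurableSpace Ω] {Pr : Measure Ω}
    {m : ℕ} (α : Fin m → ℝ) {Y M : Fin m → Ω → ℝ} {ν : Measure ℝ} [SigmaFinite ν]
    (hmeas : AEMeasurable (fun ω j => Sum.elim Y M j ω) Pr)
    (hjoint : Pr.map (fun ω j => Sum.elim Y M j ω) = Measure.pi fun _ => ν) :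
    ∫ ω, conjLog (fun i => Y i ω) (fun i => M i ω) α ∂Pr =
      ∏ i, ∫ p, logisticFun p.1 p.2 (α i) ∂(ν.prod ν) := by
  have hcont : Continuous fun x : Fin m ⊕ Fin m → ℝ =>
      ∏ i, logisticFun (x (.inl i)) (x (.inr i)) (α i) :=
    continuous_finsetProd _ fun i _ =>
      (continuous_apply _).logisticFun (continuous_apply _) (α i)
  calc ∫ ω, conjLog (fun i => Y i ω) (fun i => M i ω) α ∂Pr
      = ∫ x, ∏ i, logisticFun (x (.inl i)) (x (.inr i)) (α i)
          ∂(Pr.map fun ω j => Sum.elim Y M j ω) :=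
        (integral_map hmeas hcont.aestronglyMeasurable).symm
    _ = ∏ i, ∫ p, logisticFun p.1 p.2 (α i) ∂(ν.prod ν) := by
        rw [hjoint, integral_pi_sum_prod_eq_prod ν fun i p => logisticFun p.1 p.2 (α i)]

theorem expectation_conjLog_uniform_general
    {Ω : Type*} [MeasurableSpace Ω] (Pr : Measure Ω)
    (m : ℕ) (a : ℝ) (ha : 0 < a) (α : Fin m → ℝ)
    (Y M : Fin m → Ω → ℝ)
    (hY : ∀ i, pdf.IsUniform (Y i) (Set.Icc (-a) a) Pr)
    (hM : ∀ i, pdf.IsUniform (M i) (Set.Icc (-a) a) Pr)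
    (hInd : iIndepFun (Sum.elim Y M) Pr) :
    ∫ ω, conjLog (fun i => Y i ω) (fun i => M i ω) α ∂Pr = (1 / 2 : ℝ) ^ m := by
  have hvol0 : volume (Set.Icc (-a) a) ≠ 0 := by
    rw [Real.volume_Icc, ne_eq, ENNReal.ofReal_eq_zero, not_le]
    linarith
  have hvoltop : volume (Set.Icc (-a) a) ≠ ⊤ := measure_Icc_lt_top.ne
  set ν := cond volume (Set.Icc (-a) a)
  have : IsProbabilityMeasure ν := cond_isProbabilityMeasure_of_finite hvol0 hvoltop
  have hlaw : ∀ j, Pr.map (Sum.elim Y M j) = ν := by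
    rintro (i | i)
    exacts [hY i, hM i]
  have hmeas : ∀ j, AEMeasurable (Sum.elim Y M j) Pr := by
    rintro (i | i)
    exacts [(hY i).aemeasurable hvol0 hvoltop, (hM i).aemeasurable hvol0 hvoltop]
  have hjoint : Pr.map (fun ω j => Sum.elim Y M j ω) = Measure.pi fun _ => ν := by
    rw [hInd.map_fun_eq_pi_map hmeas]
    simp only [hlaw]
  rw [integral_conjLog_eq_prod_of_map_eq_pi α (aemeasurable_pi_lambda _ hmeas) hjoint]
  simp [integral_logisticFun_prod_self]

theorem expectation_conjLog_uniform
    {Ω : Type*} [MeasurableSpace Ω] (Pr : Measure Ω) [IsProbabilityMeasure Pr]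
    (m : ℕ) (hm : 0 < m) (a : ℝ) (ha : 0 < a) (α : Fin m → ℝ)
    (Y M : Fin m → Ω → ℝ)
    (hY : ∀ i, pdf.IsUniform (Y i) (Set.Icc (-a) a) Pr)
    (hM : ∀ i, pdf.IsUniform (M i) (Set.Icc (-a) a) Pr)
    (hInd : iIndepFun (Sum.elim Y M) Pr) :
    ∫ ω, conjLog (fun i => Y i ω) (fun i => M i ω) α ∂Pr = (1 / 2 : ℝ) ^ m :=
  expectation_conjLog_uniform_general Pr m a ha α Y M hY hM hInd
end
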